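/- arXiv:2205.00530 — 9 statements merged into one kernel-verified Lean document; each statement's English description precedes it below -/
import Mathlib

section
/- A statistic T is sufficient for θ with respect to a generalized likelihood function L_G if and only if the generalized conditional distribution p*_θ(x_1^n | t) is independent of θ for every value t of T. -/
open MeasureTheory Classical in
/-- `T` is sufficient for `θ` w.r.t. `LG` iff the generalized conditional distribution
`p*_θ(· | t)` is independent of `θ` for every value `t` of `T`. -/
theorem sufficiency_iff_conditional_indep {Ω 𝒯 Θ : Type*} [MeasurableSpace Ω]
    (μ : Measure Ω) (LG : Ω → Θ → ℝ) (T : Ω → 𝒯)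
    (pstar : Θ → Ω → ℝ)
    (hps : ∀ θ x, pstar θ x = Real.exp (LG x θ) / ∫ y, Real.exp (LG y θ) ∂μ)
    (cond : Θ → Ω → 𝒯 → ℝ)
    (hcond : ∀ θ x t, cond θ x t =
      if T x = t then pstar θ x / ∫ y in {y | T y = t}, pstar θ y ∂μ else 0)
    (hA : ∀ t, MeasurableSet {y | T y = t})
    (hint : ∀ θ, Integrable (fun y => Real.exp (LG y θ)) μ)
    (hpos : ∀ θ (x : Ω), 0 < ∫ y in {y | T y = T x}, Real.exp (LG y θ) ∂μ) :
    (∀ x y : Ω, T x = T y → ∃ c : ℝ, ∀ θ : Θ, LG x θ - LG y θ = c) ↔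
    (∀ (t : 𝒯) (x : Ω) (θ θ' : Θ), cond θ x t = cond θ' x t) := by
  -- Key formula: the normalizing constant cancels.
  have key : ∀ (θ : Θ) (x : Ω), cond θ x (T x) =
      Real.exp (LG x θ) / ∫ y in {y | T y = T x}, Real.exp (LG y θ) ∂μ := by
    intro θ x
    have hZ : 0 < ∫ y, Real.exp (LG y θ) ∂μ :=
      lt_of_lt_of_le (hpos θ x)
        (setIntegral_le_integral (hint θ) (Filter.Eventually.of_forall fun y => (Real.exp_pos _).le))
    have hden : ∫ y in {y | T y = T x}, pstar θ y ∂μ =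
        (∫ y in {y | T y = T x}, Real.exp (LG y θ) ∂μ) / ∫ y, Real.exp (LG y θ) ∂μ := by
      simp only [hps]
      exact integral_div _ _
    rw [hcond, if_pos rfl, hps, hden]
    have hB : (∫ y in {y | T y = T x}, Real.exp (LG y θ) ∂μ) ≠ 0 := (hpos θ x).ne'
    field_simp
  constructor
  · -- sufficiency → conditional independent of θ
    intro hsuff t x θ θ'
    by_cases hx : T x = t
    · subst hx
      rw [key, key]
      set k : ℝ := LG x θ - LG x θ' with hk
      have hDe : ∫ y in {y | T y = T x}, Real.exp (LG y θ) ∂μ =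
          Real.exp k * ∫ y in {y | T y = T x}, Real.exp (LG y θ') ∂μ := by
        rw [← integral_const_mul]
        refine setIntegral_congr_fun (hA (T x)) ?_
        intro y hy
        obtain ⟨c, hc⟩ := hsuff x y hy.symm
        show Real.exp (LG y θ) = Real.exp k * Real.exp (LG y θ')
        rw [← Real.exp_add]
        congr 1
        have h1 := hc θ
        have h2 := hc θ'
        simp only [hk]
        linarith
      have hex : Real.exp (LG x θ) = Real.exp k * Real.exp (LG x θ') := by
        rw [← Real.exp_add]; congr 1; simp [hk]
      rw [hDe, hex, mul_div_mul_left _ _ (Real.exp_ne_zero k)]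
    · rw [hcond, if_neg hx, hcond, if_neg hx]
  · -- conditional independent of θ → sufficiency
    intro hci x y hxy
    rcases isEmpty_or_nonempty Θ with hΘ | hne
    · exact ⟨0, fun θ => (hΘ.false θ).elim⟩
    obtain ⟨θ₀⟩ := hne
    refine ⟨LG x θ₀ - LG y θ₀, fun θ => ?_⟩
    have h1 := hci (T x) x θ θ₀
    have h2 := hci (T x) y θ θ₀
    rw [key θ x, key θ₀ x] at h1
    rw [hxy] at h2
    rw [key θ y, key θ₀ y] at h2
    rw [← hxy] at h2
    set Dθ := ∫ y' in {y' | T y' = T x}, Real.exp (LG y' θ) ∂μ with hDθ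
    set D0 := ∫ y' in {y' | T y' = T x}, Real.exp (LG y' θ₀) ∂μ with hD0
    have hDθp : 0 < Dθ := hpos θ x
    have hD0p : 0 < D0 := hpos θ₀ x
    have e1 : Real.exp (LG x θ) * D0 = Real.exp (LG x θ₀) * Dθ :=
      (div_eq_div_iff hDθp.ne' hD0p.ne').mp h1
    have e2 : Real.exp (LG y θ) * D0 = Real.exp (LG y θ₀) * Dθ :=
      (div_eq_div_iff hDθp.ne' hD0p.ne').mp h2
    have hmain : Real.exp (LG x θ) * Real.exp (LG y θ₀) =
        Real.exp (LG x θ₀) * Real.exp (LG y θ) := by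
      have hcancel : Real.exp (LG x θ) * Real.exp (LG y θ₀) * (D0 * Dθ) =
          Real.exp (LG x θ₀) * Real.exp (LG y θ) * (D0 * Dθ) := by
        calc Real.exp (LG x θ) * Real.exp (LG y θ₀) * (D0 * Dθ)
            = (Real.exp (LG x θ) * D0) * (Real.exp (LG y θ₀) * Dθ) := by ring
          _ = (Real.exp (LG x θ₀) * Dθ) * (Real.exp (LG y θ) * D0) := by rw [e1, ← e2]
          _ = Real.exp (LG x θ₀) * Real.exp (LG y θ) * (D0 * Dθ) := by ring
      exact mul_right_cancel₀ (by positivity) hcancel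
    have : Real.exp (LG x θ - LG y θ) = Real.exp (LG x θ₀ - LG y θ₀) := by
      rw [Real.exp_sub, Real.exp_sub]
      rw [div_eq_div_iff (Real.exp_ne_zero _) (Real.exp_ne_zero _)]
      linarith [hmain]
    exact Real.exp_injective this
end

section
/- Let M^(α) be the family of densities p_θ(x) = Z(θ)[h(x) + w(θ)ᵀ f(x)]^{1/(α−1)} on support S, with Z(θ) the normalizing constant. If x_1^n and y_1^n are two samples satisfying (1/n)Σ f_i(x_j) / (1/n)Σ h(x_j) = (1/n)Σ f_i(y_j) / (1/n)Σ h(y_j) for each i = 1,…,s, then the difference of Jones et al. likelihoods L_J^{(α)}(x_1^n;θ) − L_J^{(α)}(y_1^n;θ) equals (1/(α−1)) log( h̄(x_1^n) / h̄(y_1^n) ), which is independent of θ. In particular, the vector (f̄₁/h̄, …, f̄_s/h̄) is a sufficient statistic for θ with respect to L_J^{(α)}. -/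
open MeasureTheory

/-- For an `M^(α)` power-law family, if two samples agree on the statistics `f̄ᵢ/h̄`, then the
difference of Jones et al. likelihoods equals `(α−1)⁻¹ log(h̄(x)/h̄(y))`, independent of `θ`;
hence `(f̄₁/h̄, …, f̄ₛ/h̄)` is sufficient for `θ` w.r.t. `L_J^{(α)}`. -/
theorem jones_sufficiency_M_alpha {S Θ : Type*} [MeasurableSpace S] (μ : Measure S)
    (α : ℝ) (hα : 0 < α) (hα1 : α ≠ 1)
    (n s : ℕ) (hn : 0 < n)
    (p : Θ → S → ℝ) (Z : Θ → ℝ) (h : S → ℝ) (w : Θ → Fin s → ℝ) (f : Fin s → S → ℝ)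
    (hZ : ∀ θ, 0 < Z θ)
    (hbr : ∀ θ x, 0 < h x + ∑ i, w θ i * f i x)
    (hp : ∀ θ x, p θ x = Z θ * (h x + ∑ i, w θ i * f i x) ^ ((α - 1)⁻¹))
    (LJ : (Fin n → S) → Θ → ℝ)
    (hLJ : ∀ x θ, LJ x θ = (α - 1)⁻¹ * Real.log ((∑ j, p θ (x j) ^ (α - 1)) / n)
        - α⁻¹ * Real.log (∫ z, p θ z ^ α ∂μ))
    (x y : Fin n → S)
    (hhx : 0 < (∑ j, h (x j)) / n) (hhy : 0 < (∑ j, h (y j)) / n)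
    (hT : ∀ i, ((∑ j, f i (x j)) / n) / ((∑ j, h (x j)) / n)
             = ((∑ j, f i (y j)) / n) / ((∑ j, h (y j)) / n)) :
    ∀ θ : Θ, LJ x θ - LJ y θ
        = (α - 1)⁻¹ * Real.log (((∑ j, h (x j)) / n) / ((∑ j, h (y j)) / n)) := by
  intro θ
  have hα1' : α - 1 ≠ 0 := sub_ne_zero.mpr hα1
  have hn' : (n : ℝ) ≠ 0 := Nat.cast_ne_zero.mpr hn.ne'
  have hne : Nonempty (Fin n) := Fin.pos_iff_nonempty.mp hn
  have hApos : (0:ℝ) < Z θ ^ (α - 1) := Real.rpow_pos_of_pos (hZ θ) _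
  set A := Z θ ^ (α - 1) with hA
  have key : ∀ v : Fin n → S, (∑ j, p θ (v j) ^ (α - 1)) / n
      = A * ((∑ j, h (v j)) / n + ∑ i, w θ i * ((∑ j, f i (v j)) / n)) := by
    intro v
    have h1 : ∀ j, p θ (v j) ^ (α - 1) = A * (h (v j) + ∑ i, w θ i * f i (v j)) := by
      intro j
      rw [hp, Real.mul_rpow (le_of_lt (hZ θ))
        (Real.rpow_nonneg (le_of_lt (hbr θ (v j))) _),
        Real.rpow_inv_rpow (le_of_lt (hbr θ (v j))) hα1']
    have h2 : ∑ j, (h (v j) + ∑ i, w θ i * f i (v j))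
        = (∑ j, h (v j)) + ∑ i, w θ i * ∑ j, f i (v j) := by
      rw [Finset.sum_add_distrib, Finset.sum_comm]
      simp [Finset.mul_sum]
    have h3 : ∑ i, w θ i * ((∑ j, f i (v j)) / (n:ℝ))
        = (∑ i, w θ i * ∑ j, f i (v j)) / n := by
      rw [Finset.sum_div]
      exact Finset.sum_congr rfl fun i _ => by rw [mul_div_assoc]
    simp only [h1]
    rw [← Finset.mul_sum, h2, mul_div_assoc, h3, ← add_div]
  have hppos : ∀ (v : Fin n → S), 0 < (∑ j, p θ (v j) ^ (α - 1)) / n := by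
    intro v
    apply div_pos _ (by exact_mod_cast hn)
    apply Finset.sum_pos _ Finset.univ_nonempty
    intro j _
    apply Real.rpow_pos_of_pos
    rw [hp]
    exact mul_pos (hZ θ) (Real.rpow_pos_of_pos (hbr θ (v j)) _)
  set Hx := (∑ j, h (x j)) / (n:ℝ) with hHx
  set Hy := (∑ j, h (y j)) / (n:ℝ) with hHy
  set c : ℝ := 1 + ∑ i, w θ i * (((∑ j, f i (y j)) / n) / Hy) with hc
  have hSx : (∑ j, p θ (x j) ^ (α - 1)) / n = A * Hx * c := by
    rw [key x]
    have ht : ∀ i, (∑ j, f i (x j)) / (n:ℝ) = (((∑ j, f i (y j)) / n) / Hy) * Hx := by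
      intro i
      rw [← hT i]
      exact (div_mul_cancel₀ _ hhx.ne').symm
    simp only [ht]
    have hs : ∑ i, w θ i * (((∑ j, f i (y j)) / (n:ℝ)) / Hy * Hx)
        = (∑ i, w θ i * (((∑ j, f i (y j)) / (n:ℝ)) / Hy)) * Hx := by
      rw [Finset.sum_mul]
      exact Finset.sum_congr rfl fun i _ => by ring
    rw [← hHx, hs, hc]
    ring
  have hSy : (∑ j, p θ (y j) ^ (α - 1)) / n = A * Hy * c := by
    rw [key y]
    have ht : ∀ i, (∑ j, f i (y j)) / (n:ℝ) = (((∑ j, f i (y j)) / n) / Hy) * Hy := by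
      intro i
      exact (div_mul_cancel₀ _ hhy.ne').symm
    nth_rewrite 1 [Finset.sum_congr rfl fun i (_ : i ∈ Finset.univ) =>
      congrArg (w θ i * ·) (ht i)]
    have hs : ∑ i, w θ i * (((∑ j, f i (y j)) / (n:ℝ)) / Hy * Hy)
        = (∑ i, w θ i * (((∑ j, f i (y j)) / (n:ℝ)) / Hy)) * Hy := by
      rw [Finset.sum_mul]
      exact Finset.sum_congr rfl fun i _ => by ring
    rw [← hHy, hs, hc]
    ring
  have hcpos : 0 < c := by
    have h1 := hppos y
    rw [hSy] at h1
    nlinarith [mul_pos hApos hhy]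
  rw [hLJ, hLJ, hSx, hSy]
  have e1 : Real.log (A * Hx * c) = Real.log A + Real.log Hx + Real.log c := by
    rw [Real.log_mul (by positivity) hcpos.ne', Real.log_mul hApos.ne' hhx.ne']
  have e2 : Real.log (A * Hy * c) = Real.log A + Real.log Hy + Real.log c := by
    rw [Real.log_mul (by positivity) hcpos.ne', Real.log_mul hApos.ne' hhy.ne']
  rw [e1, e2, Real.log_div hhx.ne' hhy.ne']
  ring
end

section
/- For a regular M^(α)-family (i.e., with 1, w₁, …, w_k linearly independent and f₁,…,f_k linearly independent), the statistic (f̄₁/h̄, …, f̄_k/h̄) is a minimal sufficient statistic for θ with respect to the Jones et al. likelihood function L_J^{(α)}: if L_J^{(α)}(x_1^n;θ) − L_J^{(α)}(y_1^n;θ) is independent of θ, then f̄(x_1^n)/h̄(x_1^n) = f̄(y_1^n)/h̄(y_1^n). -/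
open MeasureTheory

/-- Minimal sufficiency of `(f̄₁/h̄, …, f̄ₖ/h̄)` for a regular `M^(α)`-family: if the
difference of Jones et al. likelihoods of two samples is independent of `θ`, then the two
samples have the same value of the statistic `f̄/h̄`. -/
theorem jones_minimal_sufficiency_M_alpha {S Θ : Type*} [MeasurableSpace S] (μ : Measure S)
    (α : ℝ) (hα : 0 < α) (hα1 : α ≠ 1)
    (n k : ℕ) (hn : 0 < n)
    (p : Θ → S → ℝ) (Z : Θ → ℝ) (h : S → ℝ) (w : Θ → Fin k → ℝ) (f : Fin k → S → ℝ)
    (hZ : ∀ θ, 0 < Z θ)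
    (hbr : ∀ θ x, 0 < h x + ∑ i, w θ i * f i x)
    (hp : ∀ θ x, p θ x = Z θ * (h x + ∑ i, w θ i * f i x) ^ ((α - 1)⁻¹))
    -- regularity: 1, w₁, …, w_k linearly independent as functions of θ
    (hLIw : LinearIndependent ℝ
      (Fin.cons (fun _ : Θ => (1 : ℝ)) (fun i => fun θ => w θ i) : Fin (k + 1) → Θ → ℝ))
    -- regularity: f₁, …, f_k linearly independent
    (hLIf : LinearIndependent ℝ f)
    (LJ : (Fin n → S) → Θ → ℝ)
    (hLJ : ∀ x θ, LJ x θ = (α - 1)⁻¹ * Real.log ((∑ j, p θ (x j) ^ (α - 1)) / n)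
        - α⁻¹ * Real.log (∫ z, p θ z ^ α ∂μ))
    (x y : Fin n → S)
    (hhx : 0 < (∑ j, h (x j)) / n) (hhy : 0 < (∑ j, h (y j)) / n)
    (hconst : ∃ c : ℝ, ∀ θ : Θ, LJ x θ - LJ y θ = c) :
    ∀ i, ((∑ j, f i (x j)) / n) / ((∑ j, h (x j)) / n)
       = ((∑ j, f i (y j)) / n) / ((∑ j, h (y j)) / n) := by

  obtain ⟨c, hc⟩ := hconst
  have hn' : (0:ℝ) < n := by exact_mod_cast hn
  have hn0 : (n:ℝ) ≠ 0 := ne_of_gt hn'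
  have hα1' : α - 1 ≠ 0 := sub_ne_zero_of_ne hα1
  have hne : Nonempty (Fin n) := ⟨⟨0, hn⟩⟩
  have hpow : ∀ θ s, p θ s ^ (α - 1) = Z θ ^ (α - 1) * (h s + ∑ i, w θ i * f i s) := by
    intro θ s
    rw [hp, Real.mul_rpow (hZ θ).le (Real.rpow_nonneg (hbr θ s).le _),
        ← Real.rpow_mul (hbr θ s).le, inv_mul_cancel₀ hα1', Real.rpow_one]
  have hsum : ∀ (θ : Θ) (z : Fin n → S),
      ∑ j, (h (z j) + ∑ i, w θ i * f i (z j))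
      = (∑ j, h (z j)) + ∑ i, w θ i * ∑ j, f i (z j) := by
    intro θ z
    rw [Finset.sum_add_distrib]
    congr 1
    rw [Finset.sum_comm]
    simp [Finset.mul_sum]
  have hSpos : ∀ (θ : Θ) (z : Fin n → S),
      0 < (∑ j, h (z j)) + ∑ i, w θ i * ∑ j, f i (z j) := by
    intro θ z
    rw [← hsum]
    exact Finset.sum_pos (fun j _ => hbr θ (z j)) Finset.univ_nonempty
  have hA : ∀ (θ : Θ) (z : Fin n → S),
      ∑ j, p θ (z j) ^ (α - 1)
      = Z θ ^ (α - 1) * ((∑ j, h (z j)) + ∑ i, w θ i * ∑ j, f i (z j)) := by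
    intro θ z
    rw [← hsum]
    simp [hpow, Finset.mul_sum]
  set K := Real.exp ((α - 1) * c) with hKdef
  have hKpos : 0 < K := Real.exp_pos _
  have key : ∀ θ : Θ,
      (∑ j, h (x j)) + ∑ i, w θ i * ∑ j, f i (x j)
      = K * ((∑ j, h (y j)) + ∑ i, w θ i * ∑ j, f i (y j)) := by
    intro θ
    have h1 := hc θ
    rw [hLJ, hLJ, hA, hA] at h1
    have hZp : 0 < Z θ ^ (α - 1) := Real.rpow_pos_of_pos (hZ θ) _
    have hx' := hSpos θ x
    have hy' := hSpos θ y
    have hax : 0 < Z θ ^ (α - 1) * ((∑ j, h (x j)) + ∑ i, w θ i * ∑ j, f i (x j)) / n :=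
      div_pos (mul_pos hZp hx') hn'
    have hay : 0 < Z θ ^ (α - 1) * ((∑ j, h (y j)) + ∑ i, w θ i * ∑ j, f i (y j)) / n :=
      div_pos (mul_pos hZp hy') hn'
    have h2 : Real.log (Z θ ^ (α - 1) * ((∑ j, h (x j)) + ∑ i, w θ i * ∑ j, f i (x j)) / n)
        - Real.log (Z θ ^ (α - 1) * ((∑ j, h (y j)) + ∑ i, w θ i * ∑ j, f i (y j)) / n)
        = (α - 1) * c := by
      have h3 := congrArg (fun t => (α - 1) * t) h1
      simp only [mul_sub, ← mul_assoc, mul_inv_cancel₀ hα1', one_mul] at h3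
      linarith
    rw [← Real.log_div (ne_of_gt hax) (ne_of_gt hay)] at h2
    have h4 : (Z θ ^ (α - 1) * ((∑ j, h (x j)) + ∑ i, w θ i * ∑ j, f i (x j)) / n)
        / (Z θ ^ (α - 1) * ((∑ j, h (y j)) + ∑ i, w θ i * ∑ j, f i (y j)) / n)
        = ((∑ j, h (x j)) + ∑ i, w θ i * ∑ j, f i (x j))
        / ((∑ j, h (y j)) + ∑ i, w θ i * ∑ j, f i (y j)) := by
      field_simp
    rw [h4] at h2
    have h5 : ((∑ j, h (x j)) + ∑ i, w θ i * ∑ j, f i (x j))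
        / ((∑ j, h (y j)) + ∑ i, w θ i * ∑ j, f i (y j)) = K := by
      rw [hKdef, ← h2, Real.exp_log (div_pos hx' hy')]
    rw [div_eq_iff (ne_of_gt hy')] at h5
    linarith [h5]
  have hli := Fintype.linearIndependent_iff.mp hLIw
      (Fin.cons ((∑ j, h (x j)) - K * ∑ j, h (y j))
        (fun i => (∑ j, f i (x j)) - K * ∑ j, f i (y j)))
  have hz : ∑ i : Fin (k+1),
      (Fin.cons ((∑ j, h (x j)) - K * ∑ j, h (y j))
        (fun i => (∑ j, f i (x j)) - K * ∑ j, f i (y j)) : Fin (k+1) → ℝ) i •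
      (Fin.cons (fun _ : Θ => (1 : ℝ)) (fun i => fun θ => w θ i) : Fin (k + 1) → Θ → ℝ) i
      = 0 := by
    funext θ
    have hk := key θ
    rw [mul_add] at hk
    simp only [Finset.sum_apply, Pi.smul_apply, smul_eq_mul, Fin.sum_univ_succ,
      Fin.cons_zero, Fin.cons_succ, Pi.zero_apply]
    have hexp : ∑ i, ((∑ j, f i (x j)) - K * ∑ j, f i (y j)) * w θ i
        = (∑ i, w θ i * ∑ j, f i (x j)) - K * ∑ i, w θ i * ∑ j, f i (y j) := by
      rw [Finset.mul_sum, ← Finset.sum_sub_distrib]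
      exact Finset.sum_congr rfl (fun i _ => by ring)
    rw [hexp]
    linarith
  intro i
  have h0 : (∑ j, h (x j)) = K * ∑ j, h (y j) := by
    have := hli hz 0
    rw [Fin.cons_zero, sub_eq_zero] at this
    exact this
  have hi : (∑ j, f i (x j)) = K * ∑ j, f i (y j) := by
    have := hli hz i.succ
    rw [Fin.cons_succ, sub_eq_zero] at this
    exact this
  have hHy : 0 < ∑ j, h (y j) := by
    have := mul_pos hhy hn'
    rwa [div_mul_cancel₀ _ hn0] at this
  have hHy0 : (∑ j, h (y j)) ≠ 0 := ne_of_gt hHy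
  have hK0 : K ≠ 0 := ne_of_gt hKpos
  rw [h0, hi]
  field_simp
end

section
/- For a k-parameter B^(α)-family p_θ(x) = [h(x) + F(θ) + w(θ)ᵀ f(x)]^{1/(α−1)}, the statistic f̄ = (f̄₁, …, f̄_s) is sufficient for θ with respect to the Basu et al. likelihood function L_B^{(α)}: if f̄(x_1^n) = f̄(y_1^n), then L_B^{(α)}(x_1^n;θ) − L_B^{(α)}(y_1^n;θ) = (α/(α−1))(h̄(x_1^n) − h̄(y_1^n)), independent of θ. -/
open MeasureTheory

/-- For a `B^(α)`-family, `f̄ = (f̄₁,…,f̄ₛ)` is sufficient w.r.t. the Basu et al. likelihood: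
if `f̄(x) = f̄(y)` then `L_B^{(α)}(x;θ) − L_B^{(α)}(y;θ) = (α/(α−1))(h̄(x) − h̄(y))`,
independent of `θ`. -/
theorem basu_sufficiency_B_alpha {S Θ : Type*} [MeasurableSpace S] (μ : Measure S)
    (α : ℝ) (hα : 0 < α) (hα1 : α ≠ 1)
    (n s : ℕ) (hn : 0 < n)
    (p : Θ → S → ℝ) (h : S → ℝ) (F : Θ → ℝ) (w : Θ → Fin s → ℝ) (f : Fin s → S → ℝ)
    (hbr : ∀ θ x, 0 < h x + F θ + ∑ i, w θ i * f i x)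
    (hp : ∀ θ x, p θ x = (h x + F θ + ∑ i, w θ i * f i x) ^ ((α - 1)⁻¹))
    (LB : (Fin n → S) → Θ → ℝ)
    (hLB : ∀ x θ, LB x θ = (∑ j, (α * p θ (x j) ^ (α - 1) - 1) / (α - 1)) / n
        - ∫ z, p θ z ^ α ∂μ)
    (x y : Fin n → S)
    (hT : ∀ i, (∑ j, f i (x j)) / n = (∑ j, f i (y j)) / n) :
    ∀ θ : Θ, LB x θ - LB y θ
        = (α / (α - 1)) * ((∑ j, h (x j)) / n - (∑ j, h (y j)) / n) := by
  intro θ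
  have hα1' : α - 1 ≠ 0 := sub_ne_zero.mpr hα1
  have hn' : (n : ℝ) ≠ 0 := Nat.cast_ne_zero.mpr hn.ne'
  have key : ∀ z, p θ z ^ (α - 1) = h z + F θ + ∑ i, w θ i * f i z := by
    intro z
    rw [hp, ← Real.rpow_mul (hbr θ z).le, inv_mul_cancel₀ hα1', Real.rpow_one]
  have hfs : ∀ i, (∑ j, f i (x j)) = ∑ j, f i (y j) := by
    intro i
    have := hT i
    field_simp at this
    exact this
  have expand : ∀ (z : Fin n → S),
      (∑ j, (α * p θ (z j) ^ (α - 1) - 1) / (α - 1))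
        = (α * ((∑ j, h (z j)) + n * F θ + ∑ i, w θ i * ∑ j, f i (z j)) - n) / (α - 1) := by
    intro z
    rw [← Finset.sum_div]
    congr 1
    simp only [key, mul_add, Finset.sum_sub_distrib, Finset.sum_add_distrib, Finset.mul_sum,
      Finset.sum_const, Finset.card_univ, Fintype.card_fin, nsmul_eq_mul, mul_one]
    rw [Finset.sum_comm]
    ring
  rw [hLB, hLB, expand, expand]
  simp only [hfs]
  field_simp
  ring
end

section
/- The Student distribution p_{μ,σ}(x) = N(σ,ν)·[1 + (x−μ)²/(ν σ²)]^{−(ν+1)/2} with ν > 2 can be written as a 2-parameter M^(α)-family with α = (ν−1)/(ν+1): namely p_θ(x) = Z(θ)[1 + w₁(θ)x² + w₂(θ)x]^{1/(α−1)}, where b_α = (1−α)/(1+α), w₁(θ) = b_α/(σ² + b_α μ²), w₂(θ) = −2μ b_α/(σ² + b_α μ²), and Z(θ) = N(σ,ν)(1 + μ²b_α/σ²)^{1/(α−1)}. -/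
/-!
With `α = (ν - 1)/(ν + 1)` one has `1/(α - 1) = -(ν + 1)/2` and `b_α = 1/ν`. Pulling the
constant term out of `1 + b (x - μ)² / σ²` leaves a quadratic in `x` with constant term `1`,
whose value is `(σ² + b (x - μ)²)/(σ² + b μ²) ≥ 0`; since both factors are nonnegative, the
real power of the product splits into the product of the powers.
-/

open Real

theorem student_alpha_sub_one_inv {ν : ℝ} (hν : ν + 1 ≠ 0) :
    ((ν - 1) / (ν + 1) - 1)⁻¹ = -(ν + 1) / 2 := by
  field_simp
  ring

theorem student_b_alpha_eq_inv {ν : ℝ} (hν₀ : ν ≠ 0) (hν : ν + 1 ≠ 0) :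
    (1 - (ν - 1) / (ν + 1)) / (1 + (ν - 1) / (ν + 1)) = ν⁻¹ := by
  have hden : 1 + (ν - 1) / (ν + 1) = 2 * ν / (ν + 1) := by
    field_simp
    ring
  rw [hden]
  field_simp
  ring

section QuadraticFactor

variable {b s : ℝ} (μ x : ℝ)

theorem one_add_quadratic_eq_div (hsb : s + b * μ ^ 2 ≠ 0) :
    1 + b / (s + b * μ ^ 2) * x ^ 2 + -2 * μ * b / (s + b * μ ^ 2) * x
      = (s + b * (x - μ) ^ 2) / (s + b * μ ^ 2) := by
  field_simp
  ring

theorem one_add_mul_sq_div_eq_mul (hs : s ≠ 0) (hsb : s + b * μ ^ 2 ≠ 0) :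
    1 + b * (x - μ) ^ 2 / s
      = (1 + μ ^ 2 * b / s)
        * (1 + b / (s + b * μ ^ 2) * x ^ 2 + -2 * μ * b / (s + b * μ ^ 2) * x) := by
  rw [one_add_quadratic_eq_div μ x hsb]
  field_simp

end QuadraticFactor

/-- The Student distribution with `ν > 2` degrees of freedom is a 2-parameter `M^(α)`-family
with `α = (ν−1)/(ν+1)`: the stated algebraic identity between the Student density and the
power-law form `Z(θ)[1 + w₁(θ)x² + w₂(θ)x]^{1/(α−1)}`. -/
theorem student_is_M_alpha (ν μ σ : ℝ) (hν : 2 < ν) (hσ : 0 < σ) :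
    let α := (ν - 1) / (ν + 1)
    let b := (1 - α) / (1 + α)
    let N := Real.Gamma ((ν + 1) / 2) / (Real.sqrt (ν * Real.pi * σ ^ 2) * Real.Gamma (ν / 2))
    ∀ x : ℝ,
      N * (1 + (x - μ) ^ 2 / (ν * σ ^ 2)) ^ (-(ν + 1) / 2)
        = (N * (1 + μ ^ 2 * b / σ ^ 2) ^ ((α - 1)⁻¹)) *
          (1 + (b / (σ ^ 2 + b * μ ^ 2)) * x ^ 2
             + (-2 * μ * b / (σ ^ 2 + b * μ ^ 2)) * x) ^ ((α - 1)⁻¹) := by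
  intro α b N x
  have hν₀ : 0 < ν := by linarith
  have hb : b = ν⁻¹ := student_b_alpha_eq_inv hν₀.ne' (by positivity)
  have hexp : (α - 1)⁻¹ = -(ν + 1) / 2 := student_alpha_sub_one_inv (by positivity)
  have hσ₂ : 0 < σ ^ 2 := by positivity
  have hden : 0 < σ ^ 2 + b * μ ^ 2 := by rw [hb]; positivity
  have hsplit := one_add_mul_sq_div_eq_mul μ x hσ₂.ne' hden.ne'
  have hquad : 0 ≤ 1 + b / (σ ^ 2 + b * μ ^ 2) * x ^ 2 + -2 * μ * b / (σ ^ 2 + b * μ ^ 2) * x := by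
    rw [one_add_quadratic_eq_div μ x hden.ne', hb]
    positivity
  have hbase : (x - μ) ^ 2 / (ν * σ ^ 2) = b * (x - μ) ^ 2 / σ ^ 2 := by
    rw [hb]
    field_simp
  rw [hbase, hsplit, mul_rpow (by rw [hb]; positivity) hquad, hexp, ← mul_assoc]
end

section
/- Let p*_θ be the deformed distribution associated with the Jones et al. likelihood, T a sufficient statistic for θ with respect to L_J^{(α)}, and θ̂ an estimator. Define φ*(T(x)) := E*_θ[θ̂ | T = T(x)] = ∫ θ̂(y) p*_θ(y | T(x)) dy. Then φ* is well-defined independently of θ, and E*_θ[φ*(T(X))] = E*_θ[θ̂(X)] for all θ (unbiasedness transfers under conditioning on a generalized sufficient statistic). -/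
/-!
On a fibre `{T = t}`, sufficiency makes `p*_θ z / p*_θ y = exp (L_J(z;θ) - L_J(y;θ))` independent
of `θ`, and `p*_θ(y | t) = (∫_{T = t} p*_θ z / p*_θ y dz)⁻¹`, so the conditional density does not
depend on `θ`. For the tower property, every fibre carries positive mass under the finite measure
`p*_θ μ`, so only countably many fibres occur; on each of them `φ*(t) ∫_{T = t} p*_θ` equals
`∫_{T = t} θ̂ p*_θ`, and summing over the fibres gives `E*_θ[φ*(T)] = E*_θ[θ̂]`.
-/

open MeasureTheory Set Function

section Fibers

variable {Ω 𝒯 : Type*} [MeasurableSpace Ω] {μ : Measure Ω} {T : Ω → 𝒯}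

theorem countable_range_of_setIntegral_fiber_pos {g : Ω → ℝ} (hg : Integrable g μ)
    (hg₀ : 0 ≤ g) (hA : ∀ t, MeasurableSet {z | T z = t})
    (hpos : ∀ x, 0 < ∫ z in {z | T z = T x}, g z ∂μ) : (range T).Countable := by
  have := isFiniteMeasure_withDensity_ofReal hg.2
  refine (Measure.countable_meas_pos_of_disjoint_iUnion
    (μ := μ.withDensity fun z => ENNReal.ofReal (g z)) hA (pairwise_disjoint_fiber T)).mono ?_
  rintro _ ⟨x, rfl⟩
  rw [mem_ofPred_eq, withDensity_apply _ (hA _),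
    ← ofReal_integral_eq_lintegral_ofReal hg.integrableOn (.of_forall hg₀)]
  exact ENNReal.ofReal_pos.mpr (hpos x)

theorem integral_eq_of_setIntegral_eq_of_partition {E : Type*} [NormedAddCommGroup E]
    [NormedSpace ℝ E] {ι : Type*} [Countable ι] {s : ι → Set Ω}
    (hs : ∀ i, MeasurableSet (s i)) (hd : Pairwise (Disjoint on s)) (hU : ⋃ i, s i = univ)
    {f g : Ω → E} (hg : Integrable g μ) (hf : ∀ i, IntegrableOn f (s i) μ)
    (hnorm : ∀ i, ∫ x in s i, ‖f x‖ ∂μ ≤ ∫ x in s i, ‖g x‖ ∂μ)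
    (heq : ∀ i, ∫ x in s i, f x ∂μ = ∫ x in s i, g x ∂μ) :
    ∫ x, f x ∂μ = ∫ x, g x ∂μ := by
  have hg_sum : Summable fun i => ∫ x in s i, ‖g x‖ ∂μ :=
    (hasSum_integral_iUnion hs hd (hU ▸ hg.norm.integrableOn)).summable
  have hf_int : IntegrableOn f (⋃ i, s i) μ :=
    integrableOn_iUnion_of_summable_integral_norm hf
      (hg_sum.of_nonneg_of_le (fun i => integral_nonneg fun _ => norm_nonneg _) hnorm)
  calc ∫ x, f x ∂μ = ∫ x in ⋃ i, s i, f x ∂μ := by rw [hU, setIntegral_univ]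
    _ = ∑' i, ∫ x in s i, g x ∂μ := by rw [integral_iUnion hs hd hf_int, tsum_congr heq]
    _ = ∫ x, g x ∂μ := by
      rw [← integral_iUnion hs hd (hU ▸ hg.integrableOn), hU, setIntegral_univ]

theorem integral_comp_mul_eq_of_setIntegral_fiber (hT : (range T).Countable)
    (hA : ∀ t, MeasurableSet {z | T z = t}) {p g : Ω → ℝ} {Φ : 𝒯 → ℝ}
    (hp : Integrable p μ) (hp₀ : 0 ≤ p) (hg : Integrable g μ)
    (hΦ : ∀ x, Φ (T x) * ∫ z in {z | T z = T x}, p z ∂μ = ∫ z in {z | T z = T x}, g z ∂μ) :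
    ∫ x, Φ (T x) * p x ∂μ = ∫ x, g x ∂μ := by
  have := hT.to_subtype
  have hfiber : ∀ t : range T, EqOn (fun z => Φ t * p z) (fun z => Φ (T z) * p z)
      {z | T z = (t : 𝒯)} := fun t z (hz : T z = t) => by simp only [hz]
  refine integral_eq_of_setIntegral_eq_of_partition (fun t : range T => hA t)
    ((pairwise_disjoint_fiber T).comp_of_injective Subtype.val_injective)
    (eq_univ_of_forall fun x => mem_iUnion.mpr ⟨⟨T x, x, rfl⟩, rfl⟩) hg
    (fun t => (hp.const_mul _).integrableOn.congr_fun (hfiber t) (hA t)) ?_ ?_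
  all_goals rintro ⟨_, x, rfl⟩
  · calc ∫ z in {z | T z = T x}, ‖Φ (T z) * p z‖ ∂μ
          = ∫ z in {z | T z = T x}, ‖Φ (T x) * p z‖ ∂μ :=
            (setIntegral_congr_fun (hA _) fun z hz => by simp only [hfiber ⟨T x, x, rfl⟩ hz]).symm
      _ = ‖Φ (T x) * ∫ z in {z | T z = T x}, p z ∂μ‖ := by
            simp_rw [norm_mul, Real.norm_of_nonneg (hp₀ _), integral_const_mul,
              Real.norm_of_nonneg (setIntegral_nonneg (hA _) fun z _ => hp₀ z)]
      _ ≤ ∫ z in {z | T z = T x}, ‖g z‖ ∂μ := hΦ x ▸ norm_integral_le_integral_norm _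
  · rw [← setIntegral_congr_fun (hA _) (hfiber _), integral_const_mul]
    exact hΦ x

theorem div_setIntegral_eq_inv_setIntegral_div (f : Ω → ℝ) (s : Set Ω) (y : Ω) :
    f y / ∫ z in s, f z ∂μ = (∫ z in s, f z / f y ∂μ)⁻¹ := by
  rw [integral_div, inv_div]

theorem integral_mul_ite_div {P : Ω → Prop} [DecidablePred P] (hP : MeasurableSet {y | P y})
    (f p : Ω → ℝ) (c : ℝ) :
    ∫ y, f y * (if P y then p y / c else 0) ∂μ = (∫ y in {y | P y}, f y * p y ∂μ) / c := by
  have hind : (fun y => f y * if P y then p y / c else 0) =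
      {y | P y}.indicator fun y => f y * p y / c := by
    ext y
    by_cases hy : P y <;> simp [hy, mul_div_assoc]
  rw [hind, integral_indicator hP, integral_div]

end Fibers

open MeasureTheory Classical in
/-- For the deformed distribution of the Jones et al. likelihood and a generalized
sufficient statistic `T`, the conditional expectation `φ*(T x) = E*_θ[θ̂ | T = T x]` is
independent of `θ`, and it has the same `p*_θ`-expectation as `θ̂`. -/
theorem jones_conditional_expectation_properties {Ω 𝒯 Θ : Type*} [MeasurableSpace Ω]
    (μ : Measure Ω) (LJ : Ω → Θ → ℝ) (T : Ω → 𝒯) (θhat : Ω → ℝ)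
    (pstar : Θ → Ω → ℝ)
    (hps : ∀ θ x, pstar θ x = Real.exp (LJ x θ) / ∫ y, Real.exp (LJ y θ) ∂μ)
    (cond : Θ → Ω → 𝒯 → ℝ)
    (hcond : ∀ θ y t, cond θ y t =
      if T y = t then pstar θ y / ∫ z in {z | T z = t}, pstar θ z ∂μ else 0)
    (hA : ∀ t, MeasurableSet {z | T z = t})
    (hexp : ∀ θ, Integrable (fun y => Real.exp (LJ y θ)) μ)
    (hpos : ∀ θ (x : Ω), 0 < ∫ z in {z | T z = T x}, Real.exp (LJ z θ) ∂μ)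
    -- T is sufficient w.r.t. the Jones et al. likelihood (generalized Koopman definition)
    (hsuff : ∀ x y : Ω, T x = T y → ∃ c : ℝ, ∀ θ : Θ, LJ x θ - LJ y θ = c)
    (hint : ∀ θ, Integrable (fun y => θhat y * pstar θ y) μ) :
    (∀ (θ θ' : Θ) (x : Ω),
      ∫ y, θhat y * cond θ y (T x) ∂μ = ∫ y, θhat y * cond θ' y (T x) ∂μ) ∧
    (∀ θ : Θ,
      ∫ x, (∫ y, θhat y * cond θ y (T x) ∂μ) * pstar θ x ∂μ
        = ∫ x, θhat x * pstar θ x ∂μ) := by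
  have hZ (θ : Θ) (x : Ω) : 0 < ∫ y, Real.exp (LJ y θ) ∂μ :=
    (hpos θ x).trans_le
      (setIntegral_le_integral (hexp θ) (.of_forall fun _ => (Real.exp_pos _).le))
  have hpstar (θ : Θ) : pstar θ = fun x => Real.exp (LJ x θ) / ∫ y, Real.exp (LJ y θ) ∂μ :=
    funext (hps θ)
  have hratio (θ : Θ) (x z y : Ω) : pstar θ z / pstar θ y = Real.exp (LJ z θ - LJ y θ) := by
    rw [hps, hps, div_div_div_cancel_right₀ (hZ θ x).ne', Real.exp_sub]
  have hfiber_pos (θ : Θ) (x : Ω) : 0 < ∫ z in {z | T z = T x}, pstar θ z ∂μ := by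
    rw [hpstar, integral_div]
    exact div_pos (hpos θ x) (hZ θ x)
  refine ⟨fun θ θ' x => integral_congr_ae (.of_forall fun y => ?_), fun θ => ?_⟩
  · simp only [hcond]
    split_ifs with hy
    · rw [div_setIntegral_eq_inv_setIntegral_div, div_setIntegral_eq_inv_setIntegral_div]
      refine congrArg (fun I => θhat y * I⁻¹) (setIntegral_congr_fun (hA _) fun z hz => ?_)
      obtain ⟨c, hc⟩ := hsuff z y (hz.trans hy.symm)
      rw [hratio θ x, hratio θ' x, hc, hc]
    · rfl
  · have hT : (range T).Countable :=
      countable_range_of_setIntegral_fiber_pos (hexp θ) (fun _ => (Real.exp_pos _).le) hA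
        (hpos θ)
    have hp_int : Integrable (pstar θ) μ := by
      rw [hpstar]
      exact (hexp θ).div_const _
    have hp_nonneg : 0 ≤ pstar θ := fun z => by
      rw [hps]
      exact div_nonneg (Real.exp_pos _).le (hZ θ z).le
    refine integral_comp_mul_eq_of_setIntegral_fiber (Φ := fun t => ∫ y, θhat y * cond θ y t ∂μ)
      hT hA hp_int hp_nonneg (hint θ) fun x => ?_
    simp_rw [hcond]
    rw [integral_mul_ite_div (hA (T x)), div_mul_cancel₀ _ (hfiber_pos θ x).ne']
end

section
/- For the Bernoulli model, p_θ(x) = (1−θ)[1 + x(2θ−1)/(1−θ)] for x ∈ {0,1} and θ ∈ (0,1), the deformed distribution associated with the Jones et al. likelihood with α = 2 is p*_θ(x_1^n) = N(θ)[1 + x̄(2θ−1)/(1−θ)] with N(θ)^{-1} = 2^{n−1}/(1−θ), and the conditional distribution of X_1^n given Σ x_i = t under p*_θ is uniform on the C(n,t) binary strings with sum t. -/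
/-!
The weight `q x = 1 + x̄ c`, with `c = (2θ − 1)/(1 − θ)`, is affine in the sample mean, and `x̄`
averages to `1/2` over `{0,1}^n` because each coordinate equals `1` on exactly half of the strings;
hence `∑ q = 2^(n−1) (2 + c) = 2^(n−1)/(1 − θ)`. Since `q x` depends only on `∑ xᵢ`, it is constant
on each fibre `{∑ yᵢ = t}`, which has `C(n,t)` elements, and it is positive for `θ ∈ (0,1)`; so the
conditional law on a fibre is uniform.
-/

open Finset Fintype

section BinaryStrings

variable {ι : Type*} [Fintype ι]

lemma sum_val_fin_two_eq_card_filter (y : ι → Fin 2) :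
    ∑ i, (y i : ℕ) = #{i | y i = 1} := by
  rw [card_filter]
  have hval : ∀ v : Fin 2, (v : ℕ) = if v = 1 then 1 else 0 := by decide
  exact sum_congr rfl fun i _ => hval (y i)

lemma sum_val_fin_two_le_card (y : ι → Fin 2) : ∑ i, (y i : ℕ) ≤ card ι := by
  rw [sum_val_fin_two_eq_card_filter]
  exact (card_filter_le _ _).trans_eq card_univ

variable [DecidableEq ι]

/-- Binary strings of weight `t` correspond to their supports, the `t`-subsets of `ι`. -/
lemma card_filter_sum_val_fin_two_eq_choose (t : ℕ) :
    #{y : ι → Fin 2 | ∑ i, (y i : ℕ) = t} = (card ι).choose t := by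
  rw [← card_univ, ← card_powersetCard]
  refine card_nbij' (fun y => ({i | y i = 1} : Finset ι)) (fun s i => if i ∈ s then 1 else 0)
    ?_ ?_ ?_ ?_
  · intro y hy
    simp_all [mem_powersetCard, sum_val_fin_two_eq_card_filter]
  · intro s hs
    simp_all [mem_powersetCard, sum_val_fin_two_eq_card_filter]
  · intro y _
    funext i
    simp only [mem_filter, mem_univ, true_and]
    split_ifs with hi <;> simp_all [Fin.ext_iff]
    omega
  · intro s _
    ext i
    simp

lemma sum_apply_val_fin_two (i : ι) : ∑ y : ι → Fin 2, (y i : ℕ) = 2 ^ (card ι - 1) := by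
  have hfilter := card_filter_piFinset_const (univ : Finset (Fin 2)) i 1
  rw [piFinset_univ, ← sum_val_fin_two_eq_card_filter] at hfilter
  simpa using hfilter

lemma sum_sum_val_fin_two :
    ∑ y : ι → Fin 2, ∑ i, (y i : ℕ) = card ι * 2 ^ (card ι - 1) := by
  rw [sum_comm]
  simp [sum_apply_val_fin_two]

lemma sum_one_add_mean_mul [Nonempty ι] (c : ℝ) :
    ∑ y : ι → Fin 2, (1 + (∑ i, ((y i : ℕ) : ℝ)) / card ι * c)
      = 2 ^ (card ι - 1) * (2 + c) := by
  have hmean : ∑ y : ι → Fin 2, ∑ i, ((y i : ℕ) : ℝ) = card ι * 2 ^ (card ι - 1) := by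
    exact_mod_cast sum_sum_val_fin_two
  have hcard : (card ι : ℝ) ≠ 0 := Nat.cast_ne_zero.mpr card_ne_zero
  have hpow : (2 : ℝ) ^ card ι = 2 * 2 ^ (card ι - 1) := by
    rw [← pow_succ', Nat.sub_add_cancel card_pos]
  rw [sum_add_distrib, ← sum_mul, ← sum_div, hmean]
  simp only [sum_const, card_univ, card_fun, Fintype.card_fin, nsmul_eq_mul, mul_one]
  push_cast
  rw [hpow]
  field_simp

end BinaryStrings

lemma one_add_mul_div_one_sub_pos {m θ : ℝ} (hm0 : 0 ≤ m) (hm1 : m ≤ 1)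
    (hθ0 : 0 < θ) (hθ1 : θ < 1) : 0 < 1 + m * ((2 * θ - 1) / (1 - θ)) := by
  have hθ1' : 0 < 1 - θ := sub_pos.mpr hθ1
  have hnum : 0 < (1 - m) * (1 - θ) + m * θ := by
    rcases hm0.lt_or_eq with hm | rfl
    · nlinarith
    · simpa using hθ1'
  have hrepr : 1 + m * ((2 * θ - 1) / (1 - θ)) = ((1 - m) * (1 - θ) + m * θ) / (1 - θ) := by
    field_simp
    ring
  rw [hrepr]
  positivity

lemma div_sum_eq_one_div_card_of_forall_eq {α : Type*} {s : Finset α} {f : α → ℝ} {x : α}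
    (hf : ∀ y ∈ s, f y = f x) (hx : f x ≠ 0) : f x / ∑ y ∈ s, f y = 1 / #s := by
  rw [sum_congr rfl hf, sum_const, nsmul_eq_mul]
  by_cases hs : (#s : ℝ) = 0
  · simp [hs]
  · field_simp

/-- For the Bernoulli model with `α = 2`, the deformed Jones et al. distribution on `{0,1}^n`
is `p*_θ(x) = ((1−θ)/2^{n−1})·[1 + x̄(2θ−1)/(1−θ)]`, i.e. the normalizer of
`q(x) = 1 + x̄(2θ−1)/(1−θ)` is `2^{n−1}/(1−θ)`, and the conditional distribution of the
sample given `Σxᵢ = t` is uniform on the `C(n,t)` binary strings of sum `t`. -/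
theorem bernoulli_deformed_distribution (n : ℕ) (hn : 0 < n) (θ : ℝ)
    (hθ0 : 0 < θ) (hθ1 : θ < 1)
    (q : (Fin n → Fin 2) → ℝ)
    (hq : ∀ x, q x = 1 + ((∑ i, ((x i : ℕ) : ℝ)) / n) * ((2 * θ - 1) / (1 - θ))) :
    (∑ y : Fin n → Fin 2, q y = (2 : ℝ) ^ (n - 1) / (1 - θ)) ∧
    (∀ x, q x / (∑ y : Fin n → Fin 2, q y) = ((1 - θ) / (2 : ℝ) ^ (n - 1)) * q x) ∧
    (∀ (x : Fin n → Fin 2) (t : ℕ), (∑ i, (x i : ℕ)) = t →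
      q x / (∑ y ∈ Finset.univ.filter (fun y : Fin n → Fin 2 => (∑ i, (y i : ℕ)) = t), q y)
        = 1 / (n.choose t : ℝ)) := by
  have hθ1' : 1 - θ ≠ 0 := sub_ne_zero.mpr hθ1.ne'
  have : Nonempty (Fin n) := ⟨⟨0, hn⟩⟩
  have htotal : ∑ y : Fin n → Fin 2, q y = (2 : ℝ) ^ (n - 1) / (1 - θ) := by
    have hsum := sum_one_add_mean_mul (ι := Fin n) ((2 * θ - 1) / (1 - θ))
    rw [Fintype.card_fin] at hsum
    rw [sum_congr rfl fun y _ => hq y, hsum]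
    field_simp
    ring
  refine ⟨htotal, fun x => by rw [htotal]; field_simp, fun x t hxt => ?_⟩
  have hfiber : ∀ y ∈ univ.filter (fun y : Fin n → Fin 2 => (∑ i, (y i : ℕ)) = t), q y = q x := by
    intro y hy
    rw [hq, hq, ← Nat.cast_sum, ← Nat.cast_sum, (mem_filter.mp hy).2, hxt]
  have hmean_le : (∑ i, ((x i : ℕ) : ℝ)) / n ≤ 1 := by
    rw [div_le_one (by exact_mod_cast hn)]
    exact_mod_cast (sum_val_fin_two_le_card x).trans_eq (Fintype.card_fin n)
  have hqx : 0 < q x := hq x ▸ one_add_mul_div_one_sub_pos (by positivity) hmean_le hθ0 hθ1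
  rw [div_sum_eq_one_div_card_of_forall_eq hfiber hqx.ne', card_filter_sum_val_fin_two_eq_choose,
    Fintype.card_fin]
end

section
/- Consider an M^(α)-family p_θ(x) = Z(θ)[1 + w(θ)f(x)]^{1/(α−1)}. Then the deformed distribution associated with L_J^{(α)} has the closed form p*_θ(x_1^n) = N(θ)[1 + w(θ)f̄]^{1/(α−1)}, where f̄ = (1/n)Σᵢ f(xᵢ) and N(θ)^{-1} = ∫ [1 + w(θ)f̄(y_1^n)]^{1/(α−1)} dy_1^n; i.e., p*_θ is again of M^(α) form in the statistic f̄. -/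
open MeasureTheory

/-- For an `M^(α)`-family `p_θ(x) = Z(θ)[1 + w(θ)f(x)]^{1/(α−1)}`, the deformed distribution
associated with the Jones et al. likelihood has the closed form
`p*_θ(x₁ⁿ) = N(θ)[1 + w(θ)f̄]^{1/(α−1)}`, i.e. it is again of `M^(α)` form in `f̄`. -/
theorem jones_deformed_M_alpha_closed_form {S Θ : Type*} [MeasurableSpace S] (μ : Measure S)
    (α : ℝ) (hα : 0 < α) (hα1 : α ≠ 1) (n : ℕ) (hn : 0 < n)
    (p : Θ → S → ℝ) (Z : Θ → ℝ) (w : Θ → ℝ) (f : S → ℝ)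
    (hZ : ∀ θ, 0 < Z θ) (hbr : ∀ θ x, 0 < 1 + w θ * f x)
    (hp : ∀ θ x, p θ x = Z θ * (1 + w θ * f x) ^ ((α - 1)⁻¹))
    (fbar : (Fin n → S) → ℝ) (hfb : ∀ x, fbar x = (∑ i, f (x i)) / n)
    (π : Measure (Fin n → S)) (hπ : π = Measure.pi fun _ : Fin n => μ)
    (LJ : (Fin n → S) → Θ → ℝ)
    (hLJ : ∀ x θ, LJ x θ = (α - 1)⁻¹ * Real.log ((∑ j, p θ (x j) ^ (α - 1)) / n)
        - Real.log ((∫ z, p θ z ^ α ∂μ) ^ (α⁻¹)))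
    (θ : Θ)
    (hnorm : 0 < (∫ z, p θ z ^ α ∂μ) ^ (α⁻¹))
    (hden : 0 < ∫ y, (1 + w θ * fbar y) ^ ((α - 1)⁻¹) ∂π)
    (hintexp : Integrable (fun y => Real.exp (LJ y θ)) π) :
    ∀ x : Fin n → S,
      Real.exp (LJ x θ) / (∫ y, Real.exp (LJ y θ) ∂π)
        = (∫ y, (1 + w θ * fbar y) ^ ((α - 1)⁻¹) ∂π)⁻¹
          * (1 + w θ * fbar x) ^ ((α - 1)⁻¹) := by
  have hα1' : α - 1 ≠ 0 := sub_ne_zero.mpr hα1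
  have hnR : (0 : ℝ) < (n : ℝ) := Nat.cast_pos.mpr hn
  set C : ℝ := (∫ z, p θ z ^ α ∂μ) ^ (α⁻¹) with hC
  -- barycenter positivity and average identity
  have havg : ∀ y : Fin n → S, 1 + w θ * fbar y = (∑ j, (1 + w θ * f (y j))) / n := by
    intro y
    rw [hfb, Finset.sum_add_distrib, Finset.sum_const, Finset.card_univ, Fintype.card_fin,
      nsmul_eq_mul, mul_one, ← Finset.mul_sum]
    field_simp
  have hbarpos : ∀ y : Fin n → S, 0 < 1 + w θ * fbar y := by
    intro y
    rw [havg y]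
    exact div_pos (Finset.sum_pos (fun j _ => hbr θ (y j))
      (Finset.univ_nonempty_iff.mpr ⟨⟨0, hn⟩⟩)) hnR
  -- key pointwise formula
  have key : ∀ y : Fin n → S,
      Real.exp (LJ y θ) = (Z θ / C) * (1 + w θ * fbar y) ^ ((α - 1)⁻¹) := by
    intro y
    have hsum : (∑ j, p θ (y j) ^ (α - 1)) / n = Z θ ^ (α - 1) * (1 + w θ * fbar y) := by
      have hterm : ∀ j : Fin n, p θ (y j) ^ (α - 1) = Z θ ^ (α - 1) * (1 + w θ * f (y j)) := by
        intro j
        rw [hp, Real.mul_rpow (hZ θ).le (Real.rpow_nonneg (hbr θ (y j)).le _),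
          ← Real.rpow_mul (hbr θ (y j)).le, inv_mul_cancel₀ hα1', Real.rpow_one]
      simp only [hterm, ← Finset.mul_sum]
      rw [havg y]
      field_simp
    have hTpos : 0 < Z θ ^ (α - 1) * (1 + w θ * fbar y) :=
      mul_pos (Real.rpow_pos_of_pos (hZ θ) _) (hbarpos y)
    rw [hLJ, hsum, Real.exp_sub, Real.exp_log hnorm]
    rw [show (α - 1)⁻¹ * Real.log (Z θ ^ (α - 1) * (1 + w θ * fbar y))
        = Real.log (Z θ ^ (α - 1) * (1 + w θ * fbar y)) * (α - 1)⁻¹ from mul_comm _ _,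
      ← Real.rpow_def_of_pos hTpos,
      Real.mul_rpow (Real.rpow_pos_of_pos (hZ θ) _).le (hbarpos y).le,
      ← Real.rpow_mul (hZ θ).le, mul_inv_cancel₀ hα1', Real.rpow_one]
    ring
  -- conclude
  intro x
  have hcpos : 0 < Z θ / C := div_pos (hZ θ) hnorm
  have hint : (∫ y, Real.exp (LJ y θ) ∂π)
      = (Z θ / C) * ∫ y, (1 + w θ * fbar y) ^ ((α - 1)⁻¹) ∂π := by
    simp only [key]
    exact integral_const_mul _ _
  rw [key x, hint, mul_div_mul_left _ _ (ne_of_gt hcpos), div_eq_inv_mul]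
end

section
/- Let p*_θ(x_1^n) = [F(θ) + w̃(θ) f̄]^{1/(α−1)} be a density on S^n with F, w̃ differentiable, and let s*(x,θ) = ∂/∂θ log p*_θ(x), τ*(θ) = E*_θ[f̄]. Then (a) Var*_θ[p*_θ(X)^{α−1} s*(X,θ)] = (α−1)^{−2} (w̃'(θ))² Var*_θ[f̄], and (b) Cov*_θ[s*(X,θ), p*_θ(X)^{α−1} s*(X,θ)] = (α−1)^{−1} w̃'(θ) τ*'(θ). Consequently the Jones et al. asymptotic variance Var*[p*^{α−1}s*] / Cov*[s*, p*^{α−1}s*]² equals Var*_θ[f̄] / (τ*'(θ))². -/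
/-!
Since `p*_θ ^ (α - 1) = F(θ) + w̃(θ) f̄` is affine in `f̄`, so is
`p*_θ ^ (α - 1) s* = (α - 1)⁻¹ (F'(θ) + w̃'(θ) f̄)`. Part (a) is then the scaling of a variance
under an affine map, and part (b) follows from `E*[s*] = 0` and `τ*' = E*[f̄ s*]`, both obtained
by differentiating under the integral sign; the quotient in (c) is algebra.

The one analytic point is that `s* p*_θ` and `f̄ s* p*_θ` are integrable, i.e. that the score
`s* = (α - 1)⁻¹ (F' + w̃' f̄) / (F + w̃ f̄)` grows at most linearly in `f̄`. Either the
denominator is bounded away from `0`, or it tends to `0` along some sequence of points; then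
`f̄` tends to the root `r` of `F(θ) + w̃(θ) r`, positivity for all parameters makes `θ` a minimum
of `t ↦ F(t) + w̃(t) r`, hence `F' + w̃' r = 0` and the score is constant.
-/

open MeasureTheory Filter Topology

theorem add_mul_eq_zero_of_tendsto_of_pos {F wt : ℝ → ℝ} {F' wt' θ r : ℝ}
    (hF : HasDerivAt F F' θ) (hw : HasDerivAt wt wt' θ) {y : ℕ → ℝ}
    (hy : Tendsto y atTop (𝓝 r)) (hpos : ∀ t n, 0 < F t + wt t * y n)
    (hr : F θ + wt θ * r = 0) : F' + wt' * r = 0 := by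
  have hmin : IsLocalMin (fun t => F t + wt t * r) θ := by
    refine Eventually.of_forall fun t => show F θ + wt θ * r ≤ F t + wt t * r from ?_
    rw [hr]
    exact ge_of_tendsto' (tendsto_const_nhds.add (tendsto_const_nhds.mul hy))
      fun n => (hpos t n).le
  exact hmin.hasDerivAt_eq_zero (hF.add (hw.mul_const r))

theorem abs_add_mul_div_le {A B a b δ y : ℝ} (hδ : 0 < δ) (hz : δ ≤ A + B * y) :
    |(a + b * y) / (A + B * y)| ≤ (|a| + |b|) / δ * (1 + |y|) := by
  have hnum : |a + b * y| ≤ (|a| + |b|) * (1 + |y|) := by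
    calc |a + b * y| ≤ |a| + |b| * |y| := by rw [← abs_mul]; exact abs_add_le _ _
      _ ≤ (|a| + |b|) * (1 + |y|) := by nlinarith [abs_nonneg a, abs_nonneg b, abs_nonneg y]
  rw [abs_div, abs_of_pos (hδ.trans_le hz), div_mul_eq_mul_div]
  calc |a + b * y| / (A + B * y) ≤ |a + b * y| / δ := by gcongr
    _ ≤ (|a| + |b|) * (1 + |y|) / δ := by gcongr

theorem exists_abs_add_mul_div_le {ι : Type*} {F wt : ℝ → ℝ} {F' wt' θ : ℝ}
    (hF : HasDerivAt F F' θ) (hw : HasDerivAt wt wt' θ) (f : ι → ℝ)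
    (hpos : ∀ t x, 0 < F t + wt t * f x) :
    ∃ C, ∀ x, |(F' + wt' * f x) / (F θ + wt θ * f x)| ≤ C * (1 + |f x|) := by
  by_cases hbdd : ∃ δ > 0, ∀ x, δ ≤ F θ + wt θ * f x
  · obtain ⟨δ, hδ, hz⟩ := hbdd
    exact ⟨_, fun x => abs_add_mul_div_le hδ (hz x)⟩
  push Not at hbdd
  choose x hx using fun n : ℕ => hbdd (1 / (n + 1)) (by positivity)
  have hz : Tendsto (fun n => F θ + wt θ * f (x n)) atTop (𝓝 0) :=
    squeeze_zero (fun n => (hpos θ _).le) (fun n => (hx n).le)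
      tendsto_one_div_add_atTop_nhds_zero_nat
  have hB : wt θ ≠ 0 := by
    intro hB
    simp only [hB, zero_mul, add_zero, tendsto_const_nhds_iff] at hz
    simpa [hB, hz] using hpos θ (x 0)
  have hy : Tendsto (fun n => f (x n)) atTop (𝓝 (-F θ / wt θ)) := by
    convert (hz.sub_const (F θ)).div_const (wt θ) using 2 with n
    · field_simp; ring
    · ring
  have hr := add_mul_eq_zero_of_tendsto_of_pos hF hw hy (fun t n => hpos t (x n))
    (by field_simp; ring)
  refine ⟨|wt' / wt θ|, fun y => ?_⟩
  have hconst : (F' + wt' * f y) / (F θ + wt θ * f y) = wt' / wt θ := by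
    rw [div_eq_div_iff (hpos θ y).ne' hB]
    field_simp at hr
    linear_combination hr
  rw [hconst]
  nlinarith [abs_nonneg (wt' / wt θ), abs_nonneg (f y)]

theorem score_eq_of_rpow {z p : ℝ → ℝ} {z' s c θ : ℝ} (hz : ∀ t, 0 < z t)
    (hp : ∀ t, p t = z t ^ c) (hz' : HasDerivAt z z' θ)
    (hs : HasDerivAt (fun t => Real.log (p t)) s θ) : s = c * (z' / z θ) := by
  have hlog : (fun t => Real.log (p t)) = fun t => c * Real.log (z t) :=
    funext fun t => by rw [hp, Real.log_rpow (hz t)]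
  rw [hlog] at hs
  exact hs.unique ((hz'.log (hz θ).ne').const_mul c)

section Integrals

variable {Ω : Type*} [MeasurableSpace Ω] {μ : Measure Ω}

theorem MeasureTheory.Integrable.mul_of_abs_le_one_add_abs {f g p : Ω → ℝ} {C : ℝ}
    (hg : AEStronglyMeasurable g μ) (hbound : ∀ x, |g x| ≤ C * (1 + |f x|))
    (hp : Integrable p μ) (hfp : Integrable (fun x => f x * p x) μ) :
    Integrable (fun x => g x * p x) μ := by
  refine Integrable.mono' ((hp.abs.add hfp.abs).const_mul C) (hg.mul hp.aestronglyMeasurable)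
    (ae_of_all _ fun x => ?_)
  calc ‖g x * p x‖ = |g x| * |p x| := by rw [Real.norm_eq_abs, abs_mul]
    _ ≤ C * (1 + |f x|) * |p x| := mul_le_mul_of_nonneg_right (hbound x) (abs_nonneg _)
    _ = C * (|p x| + |f x * p x|) := by rw [abs_mul]; ring

theorem integral_add_mul_mul {f u : Ω → ℝ} (a b : ℝ) (hu : Integrable u μ)
    (hfu : Integrable (fun x => f x * u x) μ) :
    ∫ x, (a + b * f x) * u x ∂μ = a * ∫ x, u x ∂μ + b * ∫ x, f x * u x ∂μ := by
  simp_rw [add_mul, mul_assoc]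
  rw [integral_add (hu.const_mul a) (hfu.const_mul b), integral_const_mul, integral_const_mul]

theorem integral_add_mul_sq_mul_sub_sq {f p : Ω → ℝ} (a b : ℝ) (hp : Integrable p μ)
    (hp1 : ∫ x, p x ∂μ = 1) (hf : Integrable (fun x => f x * p x) μ)
    (hf2 : Integrable (fun x => f x ^ 2 * p x) μ) :
    (∫ x, (a + b * f x) ^ 2 * p x ∂μ) - (∫ x, (a + b * f x) * p x ∂μ) ^ 2
      = b ^ 2 * ((∫ x, f x ^ 2 * p x ∂μ) - (∫ x, f x * p x ∂μ) ^ 2) := by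
  have hsq : (fun x => (a + b * f x) ^ 2 * p x)
      = fun x => (a ^ 2 + 2 * a * b * f x) * p x + b ^ 2 * (f x ^ 2 * p x) :=
    funext fun x => by ring
  have hlin : Integrable (fun x => (a ^ 2 + 2 * a * b * f x) * p x) μ :=
    ((hp.const_mul (a ^ 2)).add (hf.const_mul (2 * a * b))).congr
      (ae_of_all _ fun x => by simp only [Pi.add_apply]; ring)
  rw [hsq, integral_add hlin (hf2.const_mul _),
    integral_add_mul_mul _ _ hp hf, integral_add_mul_mul _ _ hp hf, integral_const_mul, hp1]
  ring

theorem integrable_score_mul {F wt : ℝ → ℝ} {F' wt' θ c : ℝ} (hF : HasDerivAt F F' θ)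
    (hw : HasDerivAt wt wt' θ) {f p s : Ω → ℝ} (hpos : ∀ t x, 0 < F t + wt t * f x)
    (hp0 : ∀ x, 0 < p x) (hs : ∀ x, s x = c * ((F' + wt' * f x) / (F θ + wt θ * f x)))
    (hp : Integrable p μ) (hfp : Integrable (fun x => f x * p x) μ)
    (hf2p : Integrable (fun x => f x ^ 2 * p x) μ) :
    Integrable (fun x => s x * p x) μ ∧ Integrable (fun x => f x * (s x * p x)) μ := by
  have hf : AEMeasurable f μ :=
    (hfp.aemeasurable.div hp.aemeasurable).congr (ae_of_all _ fun x => by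
      simp only [Pi.div_apply]; field_simp [(hp0 x).ne'])
  have hsm : AEStronglyMeasurable s μ :=
    (show AEMeasurable s μ by rw [funext hs]; fun_prop).aestronglyMeasurable
  obtain ⟨C, hC⟩ := exists_abs_add_mul_div_le hF hw f hpos
  have hbound x : |s x| ≤ |c| * C * (1 + |f x|) := by
    rw [hs, abs_mul, mul_assoc]; gcongr; exact hC x
  refine ⟨hp.mul_of_abs_le_one_add_abs hsm hbound hfp, ?_⟩
  refine (hfp.mul_of_abs_le_one_add_abs hsm hbound ?_).congr
    (ae_of_all _ fun x => by simp only; ring)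
  exact hf2p.congr (ae_of_all _ fun x => by simp only; ring)

end Integrals

/-- For the deformed power-law density `p*_θ = [F(θ) + w̃(θ)f̄]^{1/(α−1)}` with generalized
score `s* = ∂_θ log p*_θ` and `τ*(θ) = E*_θ[f̄]`:
(a) `Var*[p*^{α−1}s*] = (α−1)⁻²(w̃')² Var*[f̄]`;
(b) `Cov*[s*, p*^{α−1}s*] = (α−1)⁻¹ w̃' τ*'`;
hence the Jones et al. asymptotic variance `Var*[p*^{α−1}s*]/Cov*[s*,p*^{α−1}s*]²`
equals `Var*[f̄]/(τ*')²`. -/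
theorem jones_asymptotic_variance_M_alpha {Ω : Type*} [MeasurableSpace Ω] (μ : Measure Ω)
    (α : ℝ) (hα1 : α ≠ 1)
    (F wt : ℝ → ℝ) (F' wt' θ : ℝ)
    (hF : HasDerivAt F F' θ) (hw : HasDerivAt wt wt' θ) (hw' : wt' ≠ 0)
    (fb : Ω → ℝ)
    (pstar : ℝ → Ω → ℝ)
    (hpos : ∀ t x, 0 < F t + wt t * fb x)
    (hps : ∀ t x, pstar t x = (F t + wt t * fb x) ^ ((α - 1)⁻¹))
    (hprob : ∀ t, ∫ x, pstar t x ∂μ = 1)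
    (s : Ω → ℝ)
    (hs : ∀ x, HasDerivAt (fun t => Real.log (pstar t x)) (s x) θ)
    -- differentiation under the integral sign
    (hds : HasDerivAt (fun t => ∫ x, pstar t x ∂μ) (∫ x, s x * pstar θ x ∂μ) θ)
    (dτ : ℝ)
    (hdτ : HasDerivAt (fun t => ∫ x, fb x * pstar t x ∂μ) dτ θ)
    (hdτ' : HasDerivAt (fun t => ∫ x, fb x * pstar t x ∂μ)
        (∫ x, fb x * (s x * pstar θ x) ∂μ) θ)
    (hfb1 : Integrable (fun x => fb x * pstar θ x) μ)
    (hfb2 : Integrable (fun x => fb x ^ 2 * pstar θ x) μ) :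
    let Var : (Ω → ℝ) → ℝ := fun g =>
      (∫ x, g x ^ 2 * pstar θ x ∂μ) - (∫ x, g x * pstar θ x ∂μ) ^ 2
    let Cov : (Ω → ℝ) → (Ω → ℝ) → ℝ := fun g h =>
      (∫ x, g x * h x * pstar θ x ∂μ)
        - (∫ x, g x * pstar θ x ∂μ) * (∫ x, h x * pstar θ x ∂μ)
    (Var (fun x => pstar θ x ^ (α - 1) * s x) = (α - 1)⁻¹ ^ 2 * wt' ^ 2 * Var fb) ∧
    (Cov s (fun x => pstar θ x ^ (α - 1) * s x) = (α - 1)⁻¹ * wt' * dτ) ∧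
    (Var (fun x => pstar θ x ^ (α - 1) * s x)
        / (Cov s (fun x => pstar θ x ^ (α - 1) * s x)) ^ 2
      = Var fb / dτ ^ 2) := by
  intro Var Cov
  have hα : α - 1 ≠ 0 := sub_ne_zero.mpr hα1
  set c := (α - 1)⁻¹
  have hscore x : s x = c * ((F' + wt' * fb x) / (F θ + wt θ * fb x)) :=
    score_eq_of_rpow (z := fun t => F t + wt t * fb x) (fun t => hpos t x) (fun t => hps t x)
      (hF.add (hw.mul_const _)) (hs x)
  have hg x : pstar θ x ^ (α - 1) * s x = c * F' + c * wt' * fb x := by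
    rw [hps, Real.rpow_inv_rpow (hpos θ x).le hα, hscore]
    field_simp [(hpos θ x).ne']
  have hppos x : 0 < pstar θ x := hps θ x ▸ Real.rpow_pos_of_pos (hpos θ x) c
  have hp : Integrable (pstar θ) μ := .of_integral_ne_zero (by simp [hprob])
  obtain ⟨hsp, hfsp⟩ := integrable_score_mul hF hw hpos hppos hscore hp hfb1 hfb2
  have hmean : ∫ x, s x * pstar θ x ∂μ = 0 :=
    hds.unique (by simpa only [hprob] using hasDerivAt_const θ (1 : ℝ))
  have hvar : Var (fun x => pstar θ x ^ (α - 1) * s x) = c ^ 2 * wt' ^ 2 * Var fb := by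
    simp only [Var, hg]
    rw [integral_add_mul_sq_mul_sub_sq _ _ hp (hprob θ) hfb1 hfb2]
    ring
  have hcov : Cov s (fun x => pstar θ x ^ (α - 1) * s x) = c * wt' * dτ := by
    simp only [Cov, hmean, zero_mul, sub_zero]
    simp_rw [show ∀ x, s x * (pstar θ x ^ (α - 1) * s x) * pstar θ x
      = (c * F' + c * wt' * fb x) * (s x * pstar θ x) from fun x => by rw [hg]; ring]
    rw [integral_add_mul_mul _ _ hsp hfsp, hmean, hdτ.unique hdτ']
    ring
  refine ⟨hvar, hcov, ?_⟩
  rw [hvar, hcov, mul_pow, mul_pow, ← mul_pow]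
  exact mul_div_mul_left _ _ (pow_ne_zero 2 (mul_ne_zero (inv_ne_zero hα) hw'))
end
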